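/- Let κ > 0, α, β, δ₋₁, δ₀, δ₁ ∈ ℝ and μ ∈ ℂ. Set δ(z) := 2/z + δ₋₁ + δ₀·z + δ₁·z² and σ(z) := -√κ·(1 + z²). Then the identity δ(z)·(-i/z + iα) + μ·(σ(z)·δ'(z) - σ'(z)·δ(z)) + (1/2)·σ(z)²·(i/z²) - i·β·σ(z) = 0 holds for all z ∈ ℍ if and only if all of the following hold: μ = i(4-κ)/(4√κ); δ₋₁ = 2α; β√κ + κ - 6i√κ·μ + α·δ₋₁ - δ₀ + i√κ·μ·δ₀ = 0; α·δ₀ - δ₁ - 2i√κ·μ·(δ₋₁ - δ₁) = 0; β√κ + κ/2 - i√κ·μ·δ₀ + α·δ₁ = 0. -/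

import Mathlib

open Complex Polynomial

/-!
Multiplying the classification equation by `z²` turns it into a quartic polynomial identity in `z`,
and a polynomial vanishing on the infinite set `ℍ` has all coefficients zero. Using `(√κ)² = κ`, the
constant coefficient vanishes exactly when `μ = i(4 - κ)/(4√κ)`, the linear one when `δ₋₁ = 2α`, and
the remaining three are `i` times the last three stated conditions.
-/

theorem quartic_eq_zero_on_infinite_iff {R : Type*} [CommRing R] [IsDomain R] {S : Set R}
    (hS : S.Infinite) {a₀ a₁ a₂ a₃ a₄ : R} :
    (∀ z ∈ S, a₀ + a₁ * z + a₂ * z ^ 2 + a₃ * z ^ 3 + a₄ * z ^ 4 = 0) ↔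
      a₀ = 0 ∧ a₁ = 0 ∧ a₂ = 0 ∧ a₃ = 0 ∧ a₄ = 0 := by
  constructor
  · intro h
    set p : R[X] := C a₀ + C a₁ * X + C a₂ * X ^ 2 + C a₃ * X ^ 3 + C a₄ * X ^ 4
    have hp : p = 0 :=
      eq_zero_of_infinite_isRoot p (hS.mono fun z hz => by simpa [p] using h z hz)
    have hcoeff (n : ℕ) : p.coeff n = 0 := by rw [hp, coeff_zero]
    refine ⟨?_, ?_, ?_, ?_, ?_⟩
    · simpa [p] using hcoeff 0
    · simpa [p] using hcoeff 1
    · simpa [p] using hcoeff 2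
    · simpa [p] using hcoeff 3
    · simpa [p] using hcoeff 4
  · rintro ⟨rfl, rfl, rfl, rfl, rfl⟩ z -
    ring

theorem Complex.setOf_im_pos_infinite : {z : ℂ | 0 < z.im}.Infinite :=
  Set.infinite_of_injective_forall_mem (f := fun n : ℕ => ((n : ℂ) + 1) * I)
    (fun m n h => by simpa using congrArg im h) (fun n => by simp; positivity)

theorem classification_radial_eq_zero_iff {s κ α β dm1 d0 d1 μ z δ dδ σ dσ : ℂ}
    (hs : s ^ 2 = κ) (hz : z ≠ 0)
    (hδ : δ = 2 / z + dm1 + d0 * z + d1 * z ^ 2) (hdδ : dδ = -2 / z ^ 2 + d0 + 2 * d1 * z)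
    (hσ : σ = -s * (1 + z ^ 2)) (hdσ : dσ = -2 * s * z) :
    δ * (-I / z + I * α) + μ * (σ * dδ - dσ * δ) + (1 / 2) * σ ^ 2 * (I / z ^ 2) - I * β * σ = 0 ↔
      (2 * s * μ - I * (4 - κ) / 2) + -I * (dm1 - 2 * α) * z
        + I * (β * s + κ - 6 * I * s * μ + α * dm1 - d0 + I * s * μ * d0) * z ^ 2
        + I * (α * d0 - d1 - 2 * I * s * μ * (dm1 - d1)) * z ^ 3
        + I * (β * s + κ / 2 - I * s * μ * d0 + α * d1) * z ^ 4 = 0 := by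
  subst hδ hdδ hσ hdσ hs
  rw [← mul_eq_zero_iff_left (pow_ne_zero 2 hz)]
  apply Eq.congr_left
  field_simp
  linear_combination 2 * s * μ * ((6 - d0) * z ^ 2 + 2 * (dm1 - d1) * z ^ 3 + d0 * z ^ 4) * I_sq

theorem two_mul_mul_sub_half_eq_zero_iff {K : Type*} [Field K] [CharZero K] {s c μ : K}
    (hs : s ≠ 0) : 2 * s * μ - c / 2 = 0 ↔ μ = c / (4 * s) := by
  rw [eq_div_iff (mul_ne_zero (by norm_num) hs)]
  constructor <;> intro h
  · linear_combination 2 * h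
  · linear_combination h / 2

/-- Classification equation for (δ,σ)-SLE coupled to GFF with Dirichlet
covariance, radial-type driving field `σ(z) = -√κ(1+z²)`. -/
theorem coupling_classification_radial (κ : ℝ) (hκ : 0 < κ)
    (α β δm1 δ0 δ1 : ℝ) (μ : ℂ)
    (δ σ dδ dσ : ℂ → ℂ)
    (hδ : ∀ z, δ z = 2 / z + (δm1 : ℂ) + (δ0 : ℂ) * z + (δ1 : ℂ) * z ^ 2)
    (hdδ : ∀ z, dδ z = -2 / z ^ 2 + (δ0 : ℂ) + 2 * (δ1 : ℂ) * z)
    (hσ : ∀ z, σ z = -(Real.sqrt κ : ℂ) * (1 + z ^ 2))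
    (hdσ : ∀ z, dσ z = -2 * (Real.sqrt κ : ℂ) * z) :
    (∀ z : ℂ, 0 < z.im →
      δ z * (-Complex.I / z + Complex.I * (α : ℂ))
        + μ * (σ z * dδ z - dσ z * δ z)
        + (1 / 2) * σ z ^ 2 * (Complex.I / z ^ 2)
        - Complex.I * (β : ℂ) * σ z = 0)
    ↔ (μ = Complex.I * (4 - (κ : ℂ)) / (4 * (Real.sqrt κ : ℂ))
       ∧ δm1 = 2 * α
       ∧ (β : ℂ) * (Real.sqrt κ : ℂ) + (κ : ℂ) - 6 * Complex.I * (Real.sqrt κ : ℂ) * μ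
           + (α : ℂ) * (δm1 : ℂ) - (δ0 : ℂ)
           + Complex.I * (Real.sqrt κ : ℂ) * μ * (δ0 : ℂ) = 0
       ∧ (α : ℂ) * (δ0 : ℂ) - (δ1 : ℂ)
           - 2 * Complex.I * (Real.sqrt κ : ℂ) * μ * ((δm1 : ℂ) - (δ1 : ℂ)) = 0
       ∧ (β : ℂ) * (Real.sqrt κ : ℂ) + (κ : ℂ) / 2
           - Complex.I * (Real.sqrt κ : ℂ) * μ * (δ0 : ℂ) + (α : ℂ) * (δ1 : ℂ) = 0) := by
  have hs : ((√κ : ℝ) : ℂ) ≠ 0 := by exact_mod_cast (Real.sqrt_pos.2 hκ).ne'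
  have hs_sq : ((√κ : ℝ) : ℂ) ^ 2 = κ := by exact_mod_cast Real.sq_sqrt hκ.le
  have hδm1 : (δm1 : ℂ) = 2 * α ↔ δm1 = 2 * α := by norm_cast
  refine (forall₂_congr fun z hz => classification_radial_eq_zero_iff hs_sq
    (fun h => by simp [h] at hz) (hδ z) (hdδ z) (hσ z) (hdσ z)).trans
    ((quartic_eq_zero_on_infinite_iff Complex.setOf_im_pos_infinite).trans ?_)
  simp only [two_mul_mul_sub_half_eq_zero_iff hs, mul_eq_zero, neg_eq_zero, I_ne_zero, false_or,
    sub_eq_zero, hδm1]
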